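/- Let m ≥ 9 and n ≥ m² − m + 1. Let T be a tree on n vertices with maximum degree Δ(T) < 11n/20. Let G be a graph that does not contain the fan F_m as a subgraph and whose complement Ḡ does not contain T as a subgraph, and suppose U_1 and U_2 are disjoint independent sets of G, each of size at least n − 2m + 2. Then every vertex w ∈ V(G) ∖ (U_1 ∪ U_2) satisfies either d_{U_1}(w) ≤ m − 1 or d_{U_2}(w) ≤ m − 1, where d_{U_i}(w) is the number of neighbors of w in U_i in G. -/

import Mathlib

open Finset

/-- `Contains G H` means `G` contains a subgraph isomorphic to `H`, i.e. there is an
injective map on vertices preserving adjacency. -/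
def Contains {α β : Type*} (G : SimpleGraph α) (H : SimpleGraph β) : Prop :=
  ∃ f : β → α, Function.Injective f ∧ ∀ ⦃u v⦄, H.Adj u v → G.Adj (f u) (f v)

/-- The fan `F_m = K_1 + mK_2`: a center vertex joined to `m` disjoint edges,
so `m` triangles sharing exactly one common vertex; it has `2m + 1` vertices. -/
def fan (m : ℕ) : SimpleGraph (Unit ⊕ Fin m × Bool) :=
  SimpleGraph.fromRel (fun x y =>
    (∃ u, x = Sum.inl u) ∨ ∃ i : Fin m, x = Sum.inr (i, true) ∧ y = Sum.inr (i, false))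

set_option maxHeartbeats 1600000
set_option linter.unusedSectionVars false
set_option linter.unusedVariables false

namespace ClaimAux

variable {V : Type*} {T : SimpleGraph V}

def pen {u v : V} : T.Walk u v → V
  | .nil => u
  | .cons _ .nil => u
  | .cons _ (.cons h q) => pen (SimpleGraph.Walk.cons h q)

lemma pen_cons_nil {u v : V} (h : T.Adj u v) : pen (SimpleGraph.Walk.cons h .nil) = u := rfl

lemma pen_cons {u u' v : V} (h : T.Adj u u') (p : T.Walk u' v) (hp : p.length ≠ 0) :
    pen (SimpleGraph.Walk.cons h p) = pen p := by
  cases p with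
  | nil => simp at hp
  | cons h' q => rfl

lemma pen_adj {u v : V} : ∀ (p : T.Walk u v), p.length ≠ 0 → T.Adj (pen p) v
  | .nil, h => absurd rfl h
  | .cons h .nil, _ => h
  | .cons _ (.cons h q), _ => pen_adj (SimpleGraph.Walk.cons h q) (by simp)

lemma pen_mem {u v : V} : ∀ (p : T.Walk u v), pen p ∈ p.support
  | .nil => by simp [pen]
  | .cons h .nil => by simp [pen]
  | .cons _ (.cons h q) => by
      rw [pen_cons _ _ (by simp)]
      exact List.mem_cons_of_mem _ (pen_mem _)

lemma pen_append {u v x : V} (p : T.Walk u v) (q : T.Walk v x) (hq : q.length ≠ 0) :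
    pen (p.append q) = pen q := by
  induction p with
  | nil => simp
  | cons h p' ih =>
      rw [SimpleGraph.Walk.cons_append,
        pen_cons _ _ (by rw [SimpleGraph.Walk.length_append]; omega), ih _ hq]

section Tree

variable (hT : T.IsTree)

noncomputable def pth (u v : V) : T.Walk u v :=
  (hT.existsUnique_path u v).exists.choose

lemma pth_isPath (u v : V) : (pth hT u v).IsPath :=
  (hT.existsUnique_path u v).exists.choose_spec

lemma pth_unique {u v : V} (q : T.Walk u v) (hq : q.IsPath) : q = pth hT u v := by
  have h := hT.existsUnique_path u v
  rw [h.unique hq (pth_isPath hT u v)]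

lemma pth_self (u : V) : pth hT u u = SimpleGraph.Walk.nil := by
  rw [← pth_unique hT _ SimpleGraph.Walk.IsPath.nil]

lemma pth_reverse (u v : V) : (pth hT u v).reverse = pth hT v u :=
  pth_unique hT _ ((pth_isPath hT u v).reverse)

lemma pth_length_ne {u v : V} (h : u ≠ v) : (pth hT u v).length ≠ 0 := fun h0 =>
  h (SimpleGraph.Walk.eq_of_length_eq_zero h0)

open Classical in
noncomputable def Dset (u v : V) [Fintype V] : Finset V :=
  Finset.univ.filter (fun x => v ∈ (pth hT x u).support)

variable [Fintype V] [DecidableEq V]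

lemma mem_Dset {u v x : V} : x ∈ Dset hT u v ↔ v ∈ (pth hT x u).support := by
  simp [Dset]

lemma self_mem_Dset {u v : V} : v ∈ Dset hT u v := by
  rw [mem_Dset]; exact SimpleGraph.Walk.start_mem_support _

lemma root_not_mem_Dset {u v : V} (h : v ≠ u) : u ∉ Dset hT u v := by
  rw [mem_Dset, pth_self]
  simp [SimpleGraph.Walk.support_nil]
  exact h

lemma Dset_dichotomy {u v : V} (huv : T.Adj u v) (x : V) :
    x ∈ Dset hT u v ↔ x ∉ Dset hT v u := by
  rw [mem_Dset, mem_Dset]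
  constructor
  · intro hv hu
    have hP : (pth hT x u).IsPath := pth_isPath hT x u
    have hQ : ((pth hT x u).takeUntil v hv) = pth hT x v :=
      pth_unique hT _ (hP.takeUntil hv)
    have hu' : u ∈ ((pth hT x u).takeUntil v hv).support := by rw [hQ]; exact hu
    have hspec := (pth hT x u).take_spec hv
    have hnodup : (pth hT x u).support.Nodup := hP.support_nodup
    rw [← hspec, SimpleGraph.Walk.support_append] at hnodup
    have hdisj := (List.nodup_append'.mp hnodup).2.2
    refine hdisj hu' ?_
    have hmem : u ∈ ((pth hT x u).dropUntil v hv).support :=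
      SimpleGraph.Walk.end_mem_support _
    rw [SimpleGraph.Walk.support_eq_cons ((pth hT x u).dropUntil v hv)] at hmem
    rcases hmem with _ | hmem
    · exact absurd rfl huv.ne'
    · assumption
  · intro hu
    have hpath : ((pth hT x v).concat huv.symm).IsPath := by
      rw [← SimpleGraph.Walk.isPath_reverse_iff, SimpleGraph.Walk.reverse_concat,
        SimpleGraph.Walk.cons_isPath_iff]
      refine ⟨(pth_isPath hT x v).reverse, ?_⟩
      rw [SimpleGraph.Walk.support_reverse, List.mem_reverse]
      exact hu
    have := pth_unique hT _ hpath
    rw [← this, SimpleGraph.Walk.support_concat]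
    simp only [List.concat_eq_append, List.mem_append]
    exact Or.inl (SimpleGraph.Walk.end_mem_support _)

lemma pen_eq_of_mem {r y x : V} (hy : T.Adj y r)
    (hmem : y ∈ (pth hT x r).support) : pen (pth hT x r) = y := by
  have hspec := (pth hT x r).take_spec hmem
  have hdrop : ((pth hT x r).dropUntil y hmem) = pth hT y r :=
    pth_unique hT _ ((pth_isPath hT x r).dropUntil hmem)
  have hedge : (SimpleGraph.Walk.cons hy .nil : T.Walk y r) = pth hT y r := by
    refine pth_unique hT _ ?_
    rw [SimpleGraph.Walk.cons_isPath_iff]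
    exact ⟨SimpleGraph.Walk.IsPath.nil, by simp [hy.ne]⟩
  have hlen : ((pth hT x r).dropUntil y hmem).length ≠ 0 := by
    rw [hdrop, ← hedge]; simp
  calc pen (pth hT x r) = pen (((pth hT x r).takeUntil y hmem).append
        ((pth hT x r).dropUntil y hmem)) := by rw [hspec]
    _ = pen ((pth hT x r).dropUntil y hmem) := pen_append _ _ hlen
    _ = y := by rw [hdrop, ← hedge]; exact pen_cons_nil hy

lemma pen_branch {r x : V} (hx : x ≠ r) :
    T.Adj (pen (pth hT x r)) r ∧ x ∈ Dset hT r (pen (pth hT x r)) := by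
  refine ⟨pen_adj _ (pth_length_ne hT hx), ?_⟩
  rw [mem_Dset]
  exact pen_mem _

lemma pen_root_nbr {r y : V} (hy : T.Adj y r) : pen (pth hT y r) = y :=
  pen_eq_of_mem hT hy (SimpleGraph.Walk.start_mem_support _)

lemma mem_support_pth_comm {x y a : V} :
    a ∈ (pth hT x y).support ↔ a ∈ (pth hT y x).support := by
  rw [← pth_reverse hT y x, SimpleGraph.Walk.support_reverse, List.mem_reverse]

lemma pen_eq_of_mem_support {r u v : V} (hv : v ≠ r)
    (hm : v ∈ (pth hT u r).support) : pen (pth hT u r) = pen (pth hT v r) := by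
  have hspec := (pth hT u r).take_spec hm
  have hdrop : ((pth hT u r).dropUntil v hm) = pth hT v r :=
    pth_unique hT _ ((pth_isPath hT u r).dropUntil hm)
  calc pen (pth hT u r)
      = pen (((pth hT u r).takeUntil v hm).append ((pth hT u r).dropUntil v hm)) := by
        rw [hspec]
    _ = pen ((pth hT u r).dropUntil v hm) :=
        pen_append _ _ (by rw [hdrop]; exact pth_length_ne hT hv)
    _ = pen (pth hT v r) := by rw [hdrop]

lemma pen_edge {r u v : V} (huv : T.Adj u v) (hu : u ≠ r) (hv : v ≠ r) :
    pen (pth hT u r) = pen (pth hT v r) := by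
  have hdich : v ∈ (pth hT u r).support ∨ u ∈ (pth hT v r).support := by
    by_cases hc : v ∈ (pth hT u r).support
    · exact Or.inl hc
    · right
      have hc' : r ∉ Dset hT u v := by
        rw [mem_Dset]
        intro hmem
        exact hc ((mem_support_pth_comm hT).mp hmem)
      rw [Dset_dichotomy hT huv, not_not, mem_Dset] at hc'
      exact (mem_support_pth_comm hT).mp hc'
  rcases hdich with hm | hm
  · exact pen_eq_of_mem_support hT hv hm
  · exact (pen_eq_of_mem_support hT hu hm).symm

lemma Dset_card_add {u v : V} (huv : T.Adj u v) :
    (Dset hT u v).card + (Dset hT v u).card = Fintype.card V := by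
  have hcompl : Dset hT u v = (Dset hT v u)ᶜ := by
    ext x
    rw [Finset.mem_compl]
    exact Dset_dichotomy hT huv x
  rw [hcompl, Finset.card_compl]
  have := Finset.card_le_univ (Dset hT v u)
  omega

lemma Dset_ssub {u v z : V} (huv : T.Adj u v) (hz : T.Adj v z) (hzu : z ≠ u) :
    Dset hT v z ⊂ Dset hT u v := by
  constructor
  · intro x hx
    rw [mem_Dset] at hx
    by_contra hc
    rw [Dset_dichotomy hT huv, not_not, mem_Dset] at hc
    have h1 := pen_eq_of_mem hT hz.symm hx
    have h2 := pen_eq_of_mem hT huv hc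
    exact hzu (h1 ▸ h2 ▸ rfl)
  · intro hsub
    have h1 : v ∈ Dset hT u v := self_mem_Dset hT
    have h2 : v ∉ Dset hT v z := root_not_mem_Dset hT hz.ne'
    exact h2 (hsub h1)

variable [DecidableRel T.Adj]

lemma exists_centroid : ∃ r : V, ∀ y ∈ T.neighborFinset r,
    2 * (Dset hT r y).card ≤ Fintype.card V := by
  have hne : Nonempty V := hT.isConnected.nonempty
  by_cases hbig : ∃ e : V × V, T.Adj e.1 e.2 ∧ Fintype.card V < 2 * (Dset hT e.1 e.2).card
  · classical
    let F := Finset.univ.filter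
      (fun e : V × V => T.Adj e.1 e.2 ∧ Fintype.card V < 2 * (Dset hT e.1 e.2).card)
    have hFne : F.Nonempty := by
      obtain ⟨e, he⟩ := hbig
      exact ⟨e, Finset.mem_filter.mpr ⟨Finset.mem_univ _, he⟩⟩
    obtain ⟨e, heF, hemin⟩ := F.exists_min_image (fun e => (Dset hT e.1 e.2).card) hFne
    obtain ⟨-, hadj, hbig'⟩ := Finset.mem_filter.mp heF
    refine ⟨e.2, fun z hz => ?_⟩
    by_contra hc
    push_neg at hc
    have hzadj : T.Adj e.2 z := by rwa [SimpleGraph.mem_neighborFinset] at hz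
    have hzF : (e.2, z) ∈ F := Finset.mem_filter.mpr ⟨Finset.mem_univ _, hzadj, hc⟩
    have hmin := hemin _ hzF
    simp only at hmin
    by_cases hz1 : z = e.1
    · subst hz1
      have hsum := Dset_card_add hT hadj
      have hsum2 := Dset_card_add hT hadj.symm
      omega
    · have hlt := Finset.card_lt_card (Dset_ssub hT hadj hzadj hz1)
      omega
  · push_neg at hbig
    obtain ⟨r⟩ := hne
    refine ⟨r, fun y hy => ?_⟩
    rw [SimpleGraph.mem_neighborFinset] at hy
    exact hbig (r, y) hy

variable {r : V}

lemma Dset_disjoint_of_ne {y y' : V} (hy : T.Adj r y) (hy' : T.Adj r y') (hne : y ≠ y') :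
    Disjoint (Dset hT r y) (Dset hT r y') := by
  rw [Finset.disjoint_left]
  intro x hx hx'
  rw [mem_Dset] at hx hx'
  exact hne ((pen_eq_of_mem hT hy.symm hx) ▸ (pen_eq_of_mem hT hy'.symm hx') ▸ rfl)

lemma biUnion_Dset :
    (T.neighborFinset r).biUnion (fun y => Dset hT r y) = Finset.univ.erase r := by
  ext x
  simp only [Finset.mem_biUnion, Finset.mem_erase, Finset.mem_univ, and_true]
  constructor
  · rintro ⟨y, hy, hx⟩
    rw [SimpleGraph.mem_neighborFinset] at hy
    intro hxr
    subst hxr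
    exact root_not_mem_Dset hT hy.ne' hx
  · intro hx
    obtain ⟨hadj, hmem⟩ := pen_branch hT hx
    exact ⟨_, SimpleGraph.mem_neighborFinset _ _ _ |>.mpr hadj.symm, hmem⟩

lemma mem_biUnion_Dset_iff {S : Finset V} (hS : S ⊆ T.neighborFinset r) {x : V} (hx : x ≠ r) :
    x ∈ S.biUnion (fun y => Dset hT r y) ↔ pen (pth hT x r) ∈ S := by
  rw [Finset.mem_biUnion]
  constructor
  · rintro ⟨y, hyS, hxy⟩
    have hy : T.Adj r y := (SimpleGraph.mem_neighborFinset _ _ _).mp (hS hyS)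
    rw [mem_Dset] at hxy
    rwa [pen_eq_of_mem hT hy.symm hxy]
  · intro hpen
    obtain ⟨hadj, hmem⟩ := pen_branch hT hx
    exact ⟨_, hpen, hmem⟩

lemma root_not_mem_biUnion_Dset {S : Finset V} (hS : S ⊆ T.neighborFinset r) :
    r ∉ S.biUnion (fun y => Dset hT r y) := by
  rw [Finset.mem_biUnion]
  rintro ⟨y, hyS, hxy⟩
  have hy : T.Adj r y := (SimpleGraph.mem_neighborFinset _ _ _).mp (hS hyS)
  exact root_not_mem_Dset hT hy.ne' hxy

lemma biUnion_Dset_inter {S : Finset V} (hS : S ⊆ T.neighborFinset r) :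
    (S.biUnion (fun y => Dset hT r y)) ∩ T.neighborFinset r = S := by
  ext y'
  rw [Finset.mem_inter]
  constructor
  · rintro ⟨hin, hnb⟩
    have hy' : T.Adj r y' := (SimpleGraph.mem_neighborFinset _ _ _).mp hnb
    rw [mem_biUnion_Dset_iff hT hS hy'.ne'] at hin
    rwa [pen_root_nbr hT hy'.symm] at hin
  · intro hyS
    exact ⟨Finset.mem_biUnion.mpr ⟨y', hyS, self_mem_Dset hT⟩, hS hyS⟩

lemma card_biUnion_Dset {S : Finset V} (hS : S ⊆ T.neighborFinset r) :
    (S.biUnion (fun y => Dset hT r y)).card = ∑ y ∈ S, (Dset hT r y).card := by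
  refine Finset.card_biUnion ?_
  intro y hy y' hy' hne
  exact Dset_disjoint_of_ne hT ((SimpleGraph.mem_neighborFinset _ _ _).mp (hS hy))
    ((SimpleGraph.mem_neighborFinset _ _ _).mp (hS hy')) hne

end Tree


lemma emb_lemma {VT VG : Type*} [Fintype VT] [Fintype VG] [DecidableEq VT] [DecidableEq VG]
    (H : SimpleGraph VG) (T : SimpleGraph VT) [DecidableRel T.Adj] (r : VT)
    (X1 X2 : Finset VT)
    (hcover : ∀ x : VT, x ≠ r → (x ∈ X1 ∨ x ∈ X2))
    (hX12 : Disjoint X1 X2) (hr1 : r ∉ X1) (hr2 : r ∉ X2)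
    (hedge : ∀ u v, T.Adj u v → u ≠ r → v ≠ r → (u ∈ X1 ↔ v ∈ X1))
    (z : VG) (V1 V2 R1 R2 : Finset VG)
    (hR1 : R1 ⊆ V1) (hR2 : R2 ⊆ V2) (hV12 : Disjoint V1 V2)
    (hz1 : z ∉ V1) (hz2 : z ∉ V2)
    (hcl1 : ∀ a ∈ V1, ∀ b ∈ V1, a ≠ b → H.Adj a b)
    (hcl2 : ∀ a ∈ V2, ∀ b ∈ V2, a ≠ b → H.Adj a b)
    (hzR1 : ∀ a ∈ R1, H.Adj z a) (hzR2 : ∀ a ∈ R2, H.Adj z a)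
    (hc1 : X1.card ≤ V1.card) (hc2 : X2.card ≤ V2.card)
    (hb1 : (X1 ∩ T.neighborFinset r).card ≤ R1.card)
    (hb2 : (X2 ∩ T.neighborFinset r).card ≤ R2.card) :
    Contains H T := by
  set Y1 := X1 ∩ T.neighborFinset r with hY1def
  set Y2 := X2 ∩ T.neighborFinset r with hY2def
  have hY1X : Y1 ⊆ X1 := Finset.inter_subset_left
  have hY2X : Y2 ⊆ X2 := Finset.inter_subset_left
  obtain ⟨R1', hR1'sub, hR1'card⟩ := Finset.exists_subset_card_eq hb1
  obtain ⟨R2', hR2'sub, hR2'card⟩ := Finset.exists_subset_card_eq hb2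
  have hR1'V : R1' ⊆ V1 := hR1'sub.trans hR1
  have hR2'V : R2' ⊆ V2 := hR2'sub.trans hR2
  obtain ⟨W1, hW1sub, hW1card⟩ := Finset.exists_subset_card_eq
    (s := V1 \ R1') (n := (X1 \ Y1).card) (by
      rw [Finset.card_sdiff_of_subset hR1'V, Finset.card_sdiff_of_subset hY1X, hR1'card]
      exact Nat.sub_le_sub_right hc1 _)
  obtain ⟨W2, hW2sub, hW2card⟩ := Finset.exists_subset_card_eq
    (s := V2 \ R2') (n := (X2 \ Y2).card) (by
      rw [Finset.card_sdiff_of_subset hR2'V, Finset.card_sdiff_of_subset hY2X, hR2'card]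
      exact Nat.sub_le_sub_right hc2 _)
  have e1 : (Y1 : Finset VT) ≃ (R1' : Finset VG) := Finset.equivOfCardEq hR1'card.symm
  have e2 : ((X1 \ Y1 : Finset VT)) ≃ (W1 : Finset VG) := Finset.equivOfCardEq hW1card.symm
  have e3 : (Y2 : Finset VT) ≃ (R2' : Finset VG) := Finset.equivOfCardEq hR2'card.symm
  have e4 : ((X2 \ Y2 : Finset VT)) ≃ (W2 : Finset VG) := Finset.equivOfCardEq hW2card.symm
  classical
  set f : VT → VG := fun x =>
    if h : x ∈ Y1 then (e1 ⟨x, h⟩ : VG)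
    else if h' : x ∈ X1 then (e2 ⟨x, Finset.mem_sdiff.mpr ⟨h', h⟩⟩ : VG)
    else if h : x ∈ Y2 then (e3 ⟨x, h⟩ : VG)
    else if h' : x ∈ X2 then (e4 ⟨x, Finset.mem_sdiff.mpr ⟨h', h⟩⟩ : VG)
    else z with hfdef
  have hspec1 : ∀ x (h : x ∈ Y1), f x = (e1 ⟨x, h⟩ : VG) := by
    intro x h; simp only [hfdef]; rw [dif_pos h]
  have hspec2 : ∀ x (hx : x ∈ X1) (h : x ∉ Y1),
      f x = (e2 ⟨x, Finset.mem_sdiff.mpr ⟨hx, h⟩⟩ : VG) := by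
    intro x hx h; simp only [hfdef]; rw [dif_neg h, dif_pos hx]
  have hspec3 : ∀ x (hx1 : x ∉ X1) (h : x ∈ Y2), f x = (e3 ⟨x, h⟩ : VG) := by
    intro x hx1 h
    have hy1 : x ∉ Y1 := fun hc => hx1 (hY1X hc)
    simp only [hfdef]; rw [dif_neg hy1, dif_neg hx1, dif_pos h]
  have hspec4 : ∀ x (hx1 : x ∉ X1) (hx : x ∈ X2) (h : x ∉ Y2),
      f x = (e4 ⟨x, Finset.mem_sdiff.mpr ⟨hx, h⟩⟩ : VG) := by
    intro x hx1 hx h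
    have hy1 : x ∉ Y1 := fun hc => hx1 (hY1X hc)
    simp only [hfdef]; rw [dif_neg hy1, dif_neg hx1, dif_neg h, dif_pos hx]
  have hspec5 : ∀ x, x ∉ X1 → x ∉ X2 → f x = z := by
    intro x h1 h2
    have hy1 : x ∉ Y1 := fun hc => h1 (hY1X hc)
    have hy2 : x ∉ Y2 := fun hc => h2 (hY2X hc)
    simp only [hfdef]; rw [dif_neg hy1, dif_neg h1, dif_neg hy2, dif_neg h2]
  have hfY1 : ∀ x, x ∈ Y1 → f x ∈ R1' := fun x h => (hspec1 x h) ▸ (e1 ⟨x, h⟩).2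
  have hfZ1 : ∀ x (hx : x ∈ X1) (h : x ∉ Y1), f x ∈ W1 := fun x hx h =>
    (hspec2 x hx h) ▸ (e2 _).2
  have hfY2 : ∀ x (hx1 : x ∉ X1) (h : x ∈ Y2), f x ∈ R2' := fun x hx1 h =>
    (hspec3 x hx1 h) ▸ (e3 _).2
  have hfZ2 : ∀ x (hx1 : x ∉ X1) (hx : x ∈ X2) (h : x ∉ Y2), f x ∈ W2 := fun x hx1 hx h =>
    (hspec4 x hx1 hx h) ▸ (e4 _).2
  have hfX1 : ∀ x, x ∈ X1 → f x ∈ V1 := by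
    intro x hx
    by_cases h : x ∈ Y1
    · exact hR1'V (hfY1 x h)
    · exact (Finset.mem_sdiff.mp (hW1sub (hfZ1 x hx h))).1
  have hfX2 : ∀ x, x ∈ X2 → f x ∈ V2 := by
    intro x hx
    have hx1 : x ∉ X1 := Finset.disjoint_right.mp hX12 hx
    by_cases h : x ∈ Y2
    · exact hR2'V (hfY2 x hx1 h)
    · exact (Finset.mem_sdiff.mp (hW2sub (hfZ2 x hx1 hx h))).1
  have hfr : f r = z := hspec5 r hr1 hr2
  have hfne : ∀ x, x ≠ r → f x ≠ z := by
    intro x hx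
    rcases hcover x hx with h | h
    · exact fun hc => hz1 (hc ▸ hfX1 x h)
    · exact fun hc => hz2 (hc ▸ hfX2 x h)
  have hinj1 : ∀ x y, x ∈ X1 → y ∈ X1 → f x = f y → x = y := by
    intro x y hx hy hfxy
    by_cases hxY : x ∈ Y1 <;> by_cases hyY : y ∈ Y1
    · rw [hspec1 x hxY, hspec1 y hyY] at hfxy
      exact congrArg Subtype.val (e1.injective (Subtype.ext hfxy))
    · exfalso
      have h2 := hW1sub (hfZ1 y hy hyY)
      rw [← hfxy] at h2
      exact (Finset.mem_sdiff.mp h2).2 (hfY1 x hxY)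
    · exfalso
      have h2 := hW1sub (hfZ1 x hx hxY)
      rw [hfxy] at h2
      exact (Finset.mem_sdiff.mp h2).2 (hfY1 y hyY)
    · rw [hspec2 x hx hxY, hspec2 y hy hyY] at hfxy
      exact congrArg Subtype.val (e2.injective (Subtype.ext hfxy))
  have hinj2 : ∀ x y, x ∉ X1 → y ∉ X1 → x ∈ X2 → y ∈ X2 → f x = f y → x = y := by
    intro x y hx1 hy1 hx hy hfxy
    by_cases hxY : x ∈ Y2 <;> by_cases hyY : y ∈ Y2
    · rw [hspec3 x hx1 hxY, hspec3 y hy1 hyY] at hfxy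
      exact congrArg Subtype.val (e3.injective (Subtype.ext hfxy))
    · exfalso
      have h2 := hW2sub (hfZ2 y hy1 hy hyY)
      rw [← hfxy] at h2
      exact (Finset.mem_sdiff.mp h2).2 (hfY2 x hx1 hxY)
    · exfalso
      have h2 := hW2sub (hfZ2 x hx1 hx hxY)
      rw [hfxy] at h2
      exact (Finset.mem_sdiff.mp h2).2 (hfY2 y hy1 hyY)
    · rw [hspec4 x hx1 hx hxY, hspec4 y hy1 hy hyY] at hfxy
      exact congrArg Subtype.val (e4.injective (Subtype.ext hfxy))
  have hfinj : Function.Injective f := by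
    intro x y hfxy
    by_cases hxr : x = r <;> by_cases hyr : y = r
    · rw [hxr, hyr]
    · exact absurd (hfxy.symm.trans (hxr ▸ hfr)) (hfne y hyr)
    · exact absurd (hfxy.trans (hyr ▸ hfr)) (hfne x hxr)
    · rcases hcover x hxr with hx | hx <;> rcases hcover y hyr with hy | hy
      · exact hinj1 x y hx hy hfxy
      · exact absurd (hfxy ▸ hfX1 x hx) fun hc => Finset.disjoint_left.mp hV12 hc (hfX2 y hy)
      · exact absurd (hfxy ▸ hfX2 x hx) fun hc => Finset.disjoint_left.mp hV12 (hfxy ▸ hfX1 y hy) hc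
      · exact hinj2 x y (Finset.disjoint_right.mp hX12 hx) (Finset.disjoint_right.mp hX12 hy)
          hx hy hfxy
  refine ⟨f, hfinj, ?_⟩
  intro u v huv
  by_cases hur : u = r
  · have hvr : v ≠ r := fun hc => T.loopless.irrefl r (by rw [hur, hc] at huv; exact huv)
    rw [hur, hfr]
    have hvN : v ∈ T.neighborFinset r := (SimpleGraph.mem_neighborFinset _ _ _).mpr
      (by rw [← hur]; exact huv)
    rcases hcover v hvr with hv | hv
    · have hvY : v ∈ Y1 := Finset.mem_inter.mpr ⟨hv, hvN⟩
      exact hzR1 _ (hR1'sub (hfY1 v hvY))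
    · have hvY : v ∈ Y2 := Finset.mem_inter.mpr ⟨hv, hvN⟩
      have hv1 : v ∉ X1 := Finset.disjoint_right.mp hX12 hv
      exact hzR2 _ (hR2'sub (hfY2 v hv1 hvY))
  · by_cases hvr : v = r
    · rw [hvr, hfr]
      have huN : u ∈ T.neighborFinset r := (SimpleGraph.mem_neighborFinset _ _ _).mpr
        (by rw [← hvr]; exact huv.symm)
      rcases hcover u hur with hu | hu
      · have huY : u ∈ Y1 := Finset.mem_inter.mpr ⟨hu, huN⟩
        exact (hzR1 _ (hR1'sub (hfY1 u huY))).symm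
      · have huY : u ∈ Y2 := Finset.mem_inter.mpr ⟨hu, huN⟩
        have hu1 : u ∉ X1 := Finset.disjoint_right.mp hX12 hu
        exact (hzR2 _ (hR2'sub (hfY2 u hu1 huY))).symm
    · have hne : f u ≠ f v := fun hc => huv.ne (hfinj hc)
      rcases hcover u hur with hu | hu
      · have hv : v ∈ X1 := (hedge u v huv hur hvr).mp hu
        exact hcl1 _ (hfX1 u hu) _ (hfX1 v hv) hne
      · have hv : v ∈ X2 := by
          rcases hcover v hvr with hv | hv
          · exact absurd ((hedge u v huv hur hvr).mpr hv) fun hc =>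
              Finset.disjoint_left.mp hX12 hc hu
          · exact hv
        exact hcl2 _ (hfX2 u hu) _ (hfX2 v hv) hne


lemma select {ι : Type*} [DecidableEq ι] (m n p q d1 d2 α β : ℕ) (J : Finset ι) (c : ι → ℕ)
    (hm : 9 ≤ m) (hn9 : 9 * m ≤ n + 9)
    (hp1 : n + 2 ≤ p + 2 * m) (hq1 : n + 2 ≤ q + 2 * m)
    (hd1 : m ≤ d1) (hd2 : m ≤ d2) (hd1p : d1 ≤ p) (hd2q : d2 ≤ q)
    (hαβm : d1 + d2 + 1 ≤ α + β + m) (hαd : α ≤ d1) (hβd : β ≤ d2)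
    (hα : 1 ≤ α) (hβ : 1 ≤ β)
    (hcsum : (∑ y ∈ J, c y) + 1 = n)
    (hcpos : ∀ y ∈ J, 1 ≤ c y) (hchalf : ∀ y ∈ J, 2 * c y ≤ n)
    (hJd : 20 * J.card + 1 ≤ 11 * n) :
    (∃ S ⊆ J, S.card ≤ α ∧ 2 * m ≤ (∑ y ∈ S, c y) + 2 ∧ (∑ y ∈ S, c y) + 2 * m ≤ n + 2) ∨
    (∃ S ⊆ J, S.card ≤ β ∧ 2 * m ≤ (∑ y ∈ S, c y) + 2 ∧ (∑ y ∈ S, c y) + 2 * m ≤ n + 2) ∨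
    (∃ S ⊆ J, (∑ y ∈ S, c y) ≤ p ∧ (∑ y ∈ J \ S, c y) ≤ q ∧ S.card + d1 ≤ p ∧
      (J \ S).card + d2 ≤ q) := by
  set K := max α β with hKdef
  have hαK : α ≤ K := le_max_left _ _
  have hβK : β ≤ K := le_max_right _ _
  have h2K : m + 1 ≤ 2 * K := by omega
  by_cases hgood : ∃ S ⊆ J, S.card ≤ K ∧ 2 * m ≤ (∑ y ∈ S, c y) + 2 ∧
      (∑ y ∈ S, c y) + 2 * m ≤ n + 2
  · obtain ⟨S, hSJ, hSK, hSlow, hSup⟩ := hgood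
    rcases max_choice α β with hKα | hKβ
    · exact Or.inl ⟨S, hSJ, by omega, hSlow, hSup⟩
    · exact Or.inr (Or.inl ⟨S, hSJ, by omega, hSlow, hSup⟩)
  · right; right
    set F := J.powerset.filter (fun S => S.card ≤ K ∧ (∑ y ∈ S, c y) + 2 * m ≤ n + 2) with hFdef
    have hFne : F.Nonempty := by
      refine ⟨∅, Finset.mem_filter.mpr ⟨Finset.mem_powerset.mpr (Finset.empty_subset _), ?_⟩⟩
      simp only [Finset.card_empty, Finset.sum_empty]
      omega
    obtain ⟨S₀, hS₀F, hS₀max⟩ := F.exists_max_image (fun S => ∑ y ∈ S, c y) hFne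
    obtain ⟨hS₀pow, hS₀K, hS₀sum⟩ := Finset.mem_filter.mp hS₀F
    have hS₀J : S₀ ⊆ J := Finset.mem_powerset.mp hS₀pow
    set M := ∑ y ∈ S₀, c y with hMdef
    have hη0 : S₀.sum c = M := rfl
    have hM : M + 3 ≤ 2 * m := by
      by_contra hc
      exact hgood ⟨S₀, hS₀J, hS₀K, by omega, hS₀sum⟩
    have hcardK : S₀.card = K := by
      by_contra hne
      have hlt : S₀.card < K := lt_of_le_of_ne hS₀K hne
      have hJS : ∃ y ∈ J, y ∉ S₀ := by
        by_contra hall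
        push_neg at hall
        have hJeq : J = S₀ := Finset.Subset.antisymm hall hS₀J
        rw [← hJeq] at hMdef
        omega
      obtain ⟨y, hyJ, hyS⟩ := hJS
      have hsum_ins : ∑ x ∈ insert y S₀, c x = c y + M := Finset.sum_insert hyS
      by_cases hsum : (c y + M) + 2 * m ≤ n + 2
      · have hinsF : insert y S₀ ∈ F := by
          refine Finset.mem_filter.mpr ⟨Finset.mem_powerset.mpr
            (Finset.insert_subset hyJ hS₀J), ?_, ?_⟩
          · rw [Finset.card_insert_of_notMem hyS]; omega
          · rw [hsum_ins]; exact hsum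
        have hmax := hS₀max _ hinsF
        rw [hsum_ins] at hmax
        have := hcpos y hyJ
        omega
      · have h2c := hchalf y hyJ
        omega
    have hsmall : ∀ y ∈ J, y ∉ S₀ → c y ≤ 3 := by
      intro y hyJ hyS
      have hy' : ∃ y' ∈ S₀, c y' ≤ 3 := by
        by_contra hall
        push_neg at hall
        have h4K := Finset.card_nsmul_le_sum S₀ c 4 (fun x hx => hall x hx)
        rw [smul_eq_mul] at h4K
        omega
      obtain ⟨y', hy'S, hy'3⟩ := hy'
      have hyne : y ≠ y' := fun hc => hyS (hc ▸ hy'S)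
      have hynotin : y ∉ S₀.erase y' := fun hc => hyS (Finset.mem_of_mem_erase hc)
      set S' := insert y (S₀.erase y') with hS'def
      have hKpos : 1 ≤ K := by omega
      have hS'card : S'.card = K := by
        rw [hS'def, Finset.card_insert_of_notMem hynotin, Finset.card_erase_of_mem hy'S]
        omega
      have hsumS' : (∑ x ∈ S', c x) + c y' = M + c y := by
        rw [hS'def, Finset.sum_insert hynotin]
        have := Finset.sum_erase_add S₀ c hy'S
        omega
      have hS'J : S' ⊆ J := Finset.insert_subset hyJ ((Finset.erase_subset _ _).trans hS₀J)
      by_cases hsum : (∑ x ∈ S', c x) + 2 * m ≤ n + 2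
      · have hS'F : S' ∈ F := Finset.mem_filter.mpr
          ⟨Finset.mem_powerset.mpr hS'J, le_of_eq hS'card, hsum⟩
        have hmax := hS₀max _ hS'F
        omega
      · have h2c := hchalf y hyJ
        omega
    have hKM : K ≤ M := by
      have := Finset.card_nsmul_le_sum S₀ c 1 (fun x hx => hcpos x (hS₀J hx))
      rw [smul_eq_mul] at this
      omega
    have hd1α : d1 + 1 ≤ α + m := by omega
    have hd2β : d2 + 1 ≤ β + m := by omega
    have hd13 : d1 + 4 ≤ 3 * m := by omega
    have hd23 : d2 + 4 ≤ 3 * m := by omega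
    -- second greedy: subset of J \ S₀ with sum in [2m-2, 2m+1]
    set Jr := J \ S₀ with hJrdef
    have hJrsum : (∑ y ∈ Jr, c y) + M + 1 = n := by
      have h := Finset.sum_sdiff (f := c) hS₀J
      rw [← hJrdef] at h
      omega
    have hJrcard : Jr.card + K = J.card := by
      rw [hJrdef, Finset.card_sdiff_of_subset hS₀J]
      have := Finset.card_le_card hS₀J
      omega
    set F' := Jr.powerset.filter (fun S => (∑ y ∈ S, c y) ≤ 2 * m + 1) with hF'def
    have hF'ne : F'.Nonempty := by
      refine ⟨∅, Finset.mem_filter.mpr ⟨Finset.mem_powerset.mpr (Finset.empty_subset _), ?_⟩⟩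
      simp only [Finset.sum_empty]
      omega
    obtain ⟨S₁, hS₁F, hS₁max⟩ := F'.exists_max_image (fun S => ∑ y ∈ S, c y) hF'ne
    obtain ⟨hS₁pow, hS₁up⟩ := Finset.mem_filter.mp hS₁F
    have hS₁Jr : S₁ ⊆ Jr := Finset.mem_powerset.mp hS₁pow
    have hη1 : S₁.sum c = ∑ y ∈ S₁, c y := rfl
    have hS₁low : 2 * m ≤ (∑ y ∈ S₁, c y) + 2 := by
      by_contra hlow
      push_neg at hlow
      have hssne : ∃ y ∈ Jr, y ∉ S₁ := by
        by_contra hall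
        push_neg at hall
        have : Jr = S₁ := Finset.Subset.antisymm hall hS₁Jr
        rw [this] at hJrsum
        omega
      obtain ⟨y, hyJr, hyS₁⟩ := hssne
      have hyJ : y ∈ J := (Finset.mem_sdiff.mp hyJr).1
      have hc3 := hsmall y hyJ (Finset.mem_sdiff.mp hyJr).2
      have hsum_ins : ∑ x ∈ insert y S₁, c x = c y + ∑ y ∈ S₁, c y := Finset.sum_insert hyS₁
      have hinsF : insert y S₁ ∈ F' := by
        refine Finset.mem_filter.mpr ⟨Finset.mem_powerset.mpr
          (Finset.insert_subset hyJr hS₁Jr), ?_⟩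
        rw [hsum_ins]; omega
      have hmax := hS₁max _ hinsF
      rw [hsum_ins] at hmax
      have := hcpos y hyJ
      omega
    have hS₁card : S₁.card ≤ ∑ y ∈ S₁, c y := by
      have := Finset.card_nsmul_le_sum S₁ c 1
        (fun x hx => hcpos x ((hS₁Jr.trans Finset.sdiff_subset) hx))
      rw [smul_eq_mul] at this
      omega
    set a := J.card with hadef
    set e := (a + d2) - (q + S₁.card) with hedef
    have hcard1 : (Jr \ S₁).card + S₁.card = Jr.card :=
      Finset.card_sdiff_add_card_eq_card hS₁Jr
    have heavail : e ≤ (Jr \ S₁).card := by omega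
    obtain ⟨E, hEsub, hEcard⟩ := Finset.exists_subset_card_eq heavail
    have hηE : E.sum c = ∑ y ∈ E, c y := rfl
    have hES₁ : Disjoint S₁ E := by
      rw [Finset.disjoint_right]
      exact fun x hx => (Finset.mem_sdiff.mp (hEsub hx)).2
    set S := S₁ ∪ E with hSdef
    have hSsum : ∑ y ∈ S, c y = (∑ y ∈ S₁, c y) + ∑ y ∈ E, c y :=
      Finset.sum_union hES₁
    have hEsum3 : ∑ y ∈ E, c y ≤ 3 * e := by
      have := Finset.sum_le_card_nsmul E c 3 (fun x hx => by
        have hxJr : x ∈ Jr := Finset.sdiff_subset (hEsub hx)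
        exact hsmall x (Finset.mem_sdiff.mp hxJr).1 (Finset.mem_sdiff.mp hxJr).2)
      rw [smul_eq_mul] at this
      omega
    have hSJ : S ⊆ J := Finset.union_subset (hS₁Jr.trans Finset.sdiff_subset)
      ((hEsub.trans Finset.sdiff_subset).trans Finset.sdiff_subset)
    have hScard : S.card = S₁.card + e := by
      rw [hSdef, Finset.card_union_of_disjoint hES₁, hEcard]
    have hsum_left : (∑ y ∈ J \ S, c y) + (∑ y ∈ S, c y) = (∑ y ∈ J, c y) :=
      Finset.sum_sdiff hSJ
    have hcard_left : (J \ S).card + S.card = a :=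
      Finset.card_sdiff_add_card_eq_card hSJ
    refine ⟨S, hSJ, ?_, ?_, ?_, ?_⟩
    · omega
    · omega
    · omega
    · omega


end ClaimAux

open ClaimAux SimpleGraph in
/-- **Claim 3.6**: if additionally `G` contains no fan `F_m`, then every vertex outside
`U₁ ∪ U₂` has at most `m - 1` `G`-neighbors in `U₁` or at most `m - 1` `G`-neighbors
in `U₂`. -/
theorem few_G_neighbors_outside
    {VT VG : Type*} [Fintype VT] [Fintype VG] [DecidableEq VG]
    (m n : ℕ) (hm : 9 ≤ m) (hn : m ^ 2 - m + 1 ≤ n)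
    (T : SimpleGraph VT) [DecidableRel T.Adj] (hT : T.IsTree) (hTcard : Fintype.card VT = n)
    (hTdeg : 20 * T.maxDegree < 11 * n)
    (G : SimpleGraph VG) [DecidableRel G.Adj]
    (hnoF : ¬ Contains G (fan m)) (hnoT : ¬ Contains Gᶜ T)
    (U1 U2 : Finset VG) (hdisj : Disjoint U1 U2)
    (hind1 : ∀ a ∈ U1, ∀ b ∈ U1, ¬ G.Adj a b)
    (hind2 : ∀ a ∈ U2, ∀ b ∈ U2, ¬ G.Adj a b)
    (hc1 : n - 2 * m + 2 ≤ U1.card) (hc2 : n - 2 * m + 2 ≤ U2.card) :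
    ∀ w : VG, w ∉ U1 → w ∉ U2 →
      (G.neighborFinset w ∩ U1).card ≤ m - 1 ∨
        (G.neighborFinset w ∩ U2).card ≤ m - 1 := by
  intro w hw1 hw2
  by_contra hcon
  push_neg at hcon
  obtain ⟨hcon1, hcon2⟩ := hcon
  classical
  rw [pow_two] at hn
  have h9m : 9 * m ≤ m * m := Nat.mul_le_mul_right m hm
  have h10m : 10 * m ≤ m * m + 9 := by
    rcases Nat.lt_or_ge m 10 with h | h
    · have hm9 : m = 9 := by omega
      subst hm9; norm_num
    · have := Nat.mul_le_mul_right m h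
      omega
  have hn9 : 9 * m ≤ n + 9 := by omega
  have h2mn : 2 * m + 5 ≤ n := by omega
  have hm1 : m ≤ (G.neighborFinset w ∩ U1).card := by omega
  have hm2 : m ≤ (G.neighborFinset w ∩ U2).card := by omega
  set A := G.neighborFinset w ∩ U1 with hAdef
  set B := G.neighborFinset w ∩ U2 with hBdef
  have hAU : A ⊆ U1 := Finset.inter_subset_right
  have hBU : B ⊆ U2 := Finset.inter_subset_right
  have hAw : A ⊆ G.neighborFinset w := Finset.inter_subset_left
  have hBw : B ⊆ G.neighborFinset w := Finset.inter_subset_left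
  have hd1p : A.card ≤ U1.card := Finset.card_le_card hAU
  have hd2q : B.card ≤ U2.card := Finset.card_le_card hBU
  set k := A.card - m with hkdef
  set t : ↥A → Finset (VG ⊕ Fin k) := fun a =>
    ((G.neighborFinset (a : VG) ∩ B).image Sum.inl) ∪
      (Finset.univ.image (Sum.inr : Fin k → VG ⊕ Fin k)) with htdef
  by_cases hHall : ∀ (s : Finset ↥A), s.card ≤ (s.biUnion t).card
  · -- Hall: get an m-matching and build a fan, contradiction
    obtain ⟨f, hfinj, hft⟩ := (Finset.all_card_le_biUnion_card_iff_exists_injective t).mp hHall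
    have hfspec : ∀ a : ↥A,
        (∃ b ∈ G.neighborFinset (a : VG) ∩ B, f a = Sum.inl b) ∨ (f a).isRight := by
      intro a
      have hta := hft a
      rw [htdef] at hta
      rcases Finset.mem_union.mp hta with h | h
      · obtain ⟨b, hb, hfb⟩ := Finset.mem_image.mp h
        exact Or.inl ⟨b, hb, hfb.symm⟩
      · obtain ⟨j, hj, hfj⟩ := Finset.mem_image.mp h
        right
        rw [← hfj]
        rfl
    set Ar := Finset.univ.filter (fun a : ↥A => (f a).isLeft) with hArdef
    have hcompl : (Finset.univ.filter (fun a : ↥A => ¬ (f a).isLeft = true)).card ≤ k := by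
      have hcard : ((Finset.univ : Finset (Option (Fin k))).erase none).card = k := by
        rw [Finset.card_erase_of_mem (Finset.mem_univ _), Finset.card_univ,
          Fintype.card_option, Fintype.card_fin]
        omega
      refine le_trans (Finset.card_le_card_of_injOn (fun a => (f a).getRight?) ?_ ?_)
        (le_of_eq hcard)
      · intro a ha
        have hnl := (Finset.mem_filter.mp ha).2
        obtain ⟨j, hj⟩ := Sum.isRight_iff.mp (Sum.not_isLeft.mp (by simpa using hnl))
        refine Finset.mem_erase.mpr ⟨?_, Finset.mem_univ _⟩
        simp only
        rw [hj]
        simp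
      · intro a ha b hb hab
        have hna := (Finset.mem_filter.mp ha).2
        have hnb := (Finset.mem_filter.mp hb).2
        obtain ⟨ja, hja⟩ := Sum.isRight_iff.mp (Sum.not_isLeft.mp (by simpa using hna))
        obtain ⟨jb, hjb⟩ := Sum.isRight_iff.mp (Sum.not_isLeft.mp (by simpa using hnb))
        simp only at hab
        rw [hja, hjb] at hab
        apply hfinj
        rw [hja, hjb]
        simpa using hab
    have hcards : Ar.card + (Finset.univ.filter (fun a : ↥A => ¬ (f a).isLeft = true)).card
        = A.card := by
      rw [hArdef, Finset.card_filter_add_card_filter_not, Finset.card_univ,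
        Fintype.card_coe]
    have hArm : m ≤ Ar.card := by omega
    obtain ⟨Am, hAmsub, hAmcard⟩ := Finset.exists_subset_card_eq hArm
    have eqv : ↥Am ≃ Fin m := Am.equivFin.trans (finCongr hAmcard)
    set aS : Fin m → ↥A := fun i => ((eqv.symm i : ↥Am) : ↥A) with haSdef
    have haSmem : ∀ i, aS i ∈ Am := fun i => (eqv.symm i).2
    have haSinj : Function.Injective aS := by
      intro i j h
      exact eqv.symm.injective (Subtype.ext h)
    have hleft : ∀ i, ∃ b ∈ G.neighborFinset ((aS i : ↥A) : VG) ∩ B, f (aS i) = Sum.inl b := by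
      intro i
      rcases hfspec (aS i) with h | h
      · exact h
      · exfalso
        have hm := (Finset.mem_filter.mp (hAmsub (haSmem i))).2
        rw [Sum.isRight_iff] at h
        obtain ⟨j, hj⟩ := h
        rw [hj] at hm
        simp at hm
    choose bS hbmem hbeq using hleft
    have hbinj : Function.Injective bS := by
      intro i j h
      apply haSinj
      apply hfinj
      rw [hbeq i, hbeq j, h]
    have hbB : ∀ i, bS i ∈ B := fun i => (Finset.mem_inter.mp (hbmem i)).2
    have habAdj : ∀ i, G.Adj ((aS i : ↥A) : VG) (bS i) := fun i =>
      (SimpleGraph.mem_neighborFinset _ _ _).mp (Finset.mem_inter.mp (hbmem i)).1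
    have haA : ∀ i, ((aS i : ↥A) : VG) ∈ A := fun i => (aS i).2
    set F : Unit ⊕ Fin m × Bool → VG :=
      Sum.elim (fun _ => w) (fun p => if p.2 then ((aS p.1 : ↥A) : VG) else bS p.1) with hFdef
    have hFw : F (Sum.inl ()) = w := rfl
    have hFa : ∀ i, F (Sum.inr (i, true)) = ((aS i : ↥A) : VG) := fun i => rfl
    have hFb : ∀ i, F (Sum.inr (i, false)) = bS i := fun i => rfl
    have hFU : ∀ (p : Fin m × Bool), F (Sum.inr p) ∈ U1 ∪ U2 := by
      rintro ⟨i, bi⟩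
      cases bi
      · exact Finset.mem_union_right _ (hBU (hbB i))
      · exact Finset.mem_union_left _ (hAU (haA i))
    have hwImg : ∀ (p : Fin m × Bool), w ≠ F (Sum.inr p) := by
      intro p hc
      rcases Finset.mem_union.mp (hFU p) with h | h
      · exact hw1 (hc ▸ h)
      · exact hw2 (hc ▸ h)
    have hFinj : Function.Injective F := by
      rintro (u | ⟨i, bi⟩) (v | ⟨j, bj⟩) hxy
      · simp
      · exact absurd hxy (hwImg _)
      · exact absurd hxy.symm (hwImg _)
      · cases bi <;> cases bj
        · rw [hFb, hFb] at hxy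
          rw [hbinj hxy]
        · exfalso
          rw [hFb, hFa] at hxy
          exact Finset.disjoint_left.mp hdisj (hAU (haA j)) (hxy ▸ hBU (hbB i))
        · exfalso
          rw [hFa, hFb] at hxy
          exact Finset.disjoint_left.mp hdisj (hAU (haA i)) (hxy ▸ hBU (hbB j))
        · rw [hFa, hFa] at hxy
          rw [haSinj (Subtype.ext hxy)]
    have hAdjw : ∀ (p : Fin m × Bool), G.Adj w (F (Sum.inr p)) := by
      rintro ⟨i, bi⟩
      cases bi
      · exact (SimpleGraph.mem_neighborFinset _ _ _).mp (hBw (hbB i))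
      · exact (SimpleGraph.mem_neighborFinset _ _ _).mp (hAw (haA i))
    have hAdjab : ∀ i : Fin m, G.Adj (F (Sum.inr (i, true))) (F (Sum.inr (i, false))) := by
      intro i
      rw [hFa, hFb]
      exact habAdj i
    refine hnoF ⟨F, hFinj, ?_⟩
    intro u v huv
    rw [fan, SimpleGraph.fromRel_adj] at huv
    obtain ⟨hne, hrel⟩ := huv
    rcases hrel with (⟨u', hu⟩ | ⟨i, hu, hv⟩) | (⟨v', hv⟩ | ⟨i, hv, hu⟩)
    · subst hu
      rcases v with v' | p
      · exact absurd (congrArg Sum.inl (Subsingleton.elim u' v')) hne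
      · exact hAdjw p
    · subst hu; subst hv
      exact hAdjab i
    · subst hv
      rcases u with u' | p
      · exact absurd (congrArg Sum.inl (Subsingleton.elim u' v')) hne
      · exact (hAdjw p).symm
    · subst hu; subst hv
      exact (hAdjab i).symm
  · -- no Hall: extract complete bipartite complement pair and embed the tree in Gᶜ
    push_neg at hHall
    obtain ⟨s, hs⟩ := hHall
    have hsne : s.Nonempty := by
      rw [← Finset.card_pos]
      omega
    set NB := s.biUnion (fun a => G.neighborFinset ((a : ↥A) : VG) ∩ B) with hNBdef
    have hbi : s.biUnion t = (NB.image Sum.inl) ∪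
        (Finset.univ.image (Sum.inr : Fin k → VG ⊕ Fin k)) := by
      obtain ⟨a₀, ha₀⟩ := hsne
      ext x
      simp only [htdef, hNBdef, Finset.mem_biUnion, Finset.mem_union, Finset.mem_image]
      constructor
      · rintro ⟨a, ha, h | h⟩
        · obtain ⟨b, hb, hbx⟩ := h
          exact Or.inl ⟨b, ⟨a, ha, hb⟩, hbx⟩
        · exact Or.inr h
      · rintro (⟨b, ⟨a, ha, hb⟩, hbx⟩ | h)
        · exact ⟨a, ha, Or.inl ⟨b, hb, hbx⟩⟩
        · exact ⟨a₀, ha₀, Or.inr h⟩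
    have hdisjlr : Disjoint (NB.image (Sum.inl : VG → VG ⊕ Fin k))
        (Finset.univ.image (Sum.inr : Fin k → VG ⊕ Fin k)) := by
      rw [Finset.disjoint_left]
      rintro x hx hy
      obtain ⟨b, _, hbx⟩ := Finset.mem_image.mp hx
      obtain ⟨j, _, hjx⟩ := Finset.mem_image.mp hy
      rw [← hbx] at hjx
      exact Sum.inl_ne_inr hjx.symm
    have hcnt : NB.card + k < s.card := by
      have h1 := hs
      rw [hbi, Finset.card_union_of_disjoint hdisjlr,
        Finset.card_image_of_injective _ Sum.inl_injective,
        Finset.card_image_of_injective _ Sum.inr_injective, Finset.card_univ,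
        Fintype.card_fin] at h1
      omega
    set A' := s.image (Subtype.val) with hA'def
    have hA'card : A'.card = s.card := Finset.card_image_of_injective _ Subtype.val_injective
    have hA'A : A' ⊆ A := by
      intro x hx
      obtain ⟨a, _, rfl⟩ := Finset.mem_image.mp hx
      exact a.2
    have hNBB : NB ⊆ B := by
      intro x hx
      obtain ⟨a, _, hxa⟩ := Finset.mem_biUnion.mp hx
      exact (Finset.mem_inter.mp hxa).2
    set B' := B \ NB with hB'def
    have hB'card : B'.card + NB.card = B.card := Finset.card_sdiff_add_card_eq_card hNBB
    have hnoedge : ∀ a ∈ A', ∀ b ∈ B', ¬ G.Adj a b := by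
      intro a ha b hb hadj
      obtain ⟨a₀, ha₀, rfl⟩ := Finset.mem_image.mp ha
      refine (Finset.mem_sdiff.mp hb).2 ?_
      exact Finset.mem_biUnion.mpr ⟨a₀, ha₀,
        Finset.mem_inter.mpr ⟨(SimpleGraph.mem_neighborFinset _ _ _).mpr hadj,
          (Finset.mem_sdiff.mp hb).1⟩⟩
    have hA'U : A' ⊆ U1 := hA'A.trans hAU
    have hB'U : B' ⊆ U2 := Finset.sdiff_subset.trans hBU
    have hαd : A'.card ≤ A.card := Finset.card_le_card hA'A
    have hβd : B'.card ≤ B.card := Finset.card_le_card Finset.sdiff_subset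
    have hαβ : A.card + B.card + 1 ≤ A'.card + B'.card + m := by omega
    have hαpos : 1 ≤ A'.card := by omega
    have hβpos : 1 ≤ B'.card := by omega
    -- tree side
    have hnVT : 1 ≤ Fintype.card VT := by omega
    obtain ⟨r, hcent⟩ := exists_centroid hT
    set J := T.neighborFinset r with hJdef
    set c : VT → ℕ := fun y => (Dset hT r y).card with hcdef
    have hη : ∑ y ∈ J, c y = ∑ y ∈ J, (Dset hT r y).card := by simp [hcdef]
    have hcsum : (∑ y ∈ J, c y) + 1 = n := by
      have h1 := card_biUnion_Dset hT (Finset.Subset.refl J)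
      rw [biUnion_Dset hT] at h1
      rw [Finset.card_erase_of_mem (Finset.mem_univ r), Finset.card_univ, hTcard] at h1
      omega
    have hcpos : ∀ y ∈ J, 1 ≤ c y := by
      intro y hy
      rw [hcdef]
      exact Finset.card_pos.mpr ⟨y, self_mem_Dset hT⟩
    have hchalf : ∀ y ∈ J, 2 * c y ≤ n := by
      intro y hy
      have h := hcent y hy
      rw [hTcard] at h
      simpa [hcdef] using h
    have hJd : 20 * J.card + 1 ≤ 11 * n := by
      have h1 : J.card = T.degree r := rfl
      have h2 := T.degree_le_maxDegree r
      omega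
    have hp1 : n + 2 ≤ U1.card + 2 * m := by omega
    have hq1 : n + 2 ≤ U2.card + 2 * m := by omega
    -- common branch structures
    have hXfacts : ∀ S ⊆ J,
        (S.biUnion (fun y => Dset hT r y)).card = ∑ y ∈ S, c y := by
      intro S hS
      rw [card_biUnion_Dset hT hS]
    have hXcover : ∀ S ⊆ J, ∀ x : VT, x ≠ r →
        (x ∈ S.biUnion (fun y => Dset hT r y) ∨
          x ∈ (J \ S).biUnion (fun y => Dset hT r y)) := by
      intro S hS x hx
      obtain ⟨hadj, hmem⟩ := pen_branch hT (r := r) hx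
      have hyJ : pen (pth hT x r) ∈ J := (SimpleGraph.mem_neighborFinset _ _ _).mpr hadj.symm
      by_cases hyS : pen (pth hT x r) ∈ S
      · exact Or.inl (Finset.mem_biUnion.mpr ⟨_, hyS, hmem⟩)
      · exact Or.inr (Finset.mem_biUnion.mpr ⟨_, Finset.mem_sdiff.mpr ⟨hyJ, hyS⟩, hmem⟩)
    have hXr : ∀ S ⊆ J, r ∉ S.biUnion (fun y => Dset hT r y) := by
      intro S hS
      exact root_not_mem_biUnion_Dset hT hS
    have hXdisj : ∀ S ⊆ J, Disjoint (S.biUnion (fun y => Dset hT r y))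
        ((J \ S).biUnion (fun y => Dset hT r y)) := by
      intro S hS
      rw [Finset.disjoint_left]
      intro x h1 h2
      have hxr : x ≠ r := by
        rintro rfl
        exact hXr S hS h1
      rw [mem_biUnion_Dset_iff hT hS hxr] at h1
      rw [mem_biUnion_Dset_iff hT (Finset.sdiff_subset.trans (Finset.Subset.refl J)) hxr] at h2
      exact (Finset.mem_sdiff.mp h2).2 h1
    have hXedge : ∀ S ⊆ J, ∀ u v, T.Adj u v → u ≠ r → v ≠ r →
        (u ∈ S.biUnion (fun y => Dset hT r y) ↔ v ∈ S.biUnion (fun y => Dset hT r y)) := by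
      intro S hS u v huv hu hv
      rw [mem_biUnion_Dset_iff hT hS hu, mem_biUnion_Dset_iff hT hS hv,
        pen_edge hT huv hu hv]
    have hXinter : ∀ S ⊆ J,
        (S.biUnion (fun y => Dset hT r y)) ∩ T.neighborFinset r = S := by
      intro S hS
      exact biUnion_Dset_inter hT hS
    have hcl1 : ∀ a ∈ U1, ∀ b ∈ U1, a ≠ b → Gᶜ.Adj a b := by
      intro a ha b hb hne
      exact (SimpleGraph.compl_adj G a b).mpr ⟨hne, hind1 a ha b hb⟩
    have hcl2 : ∀ a ∈ U2, ∀ b ∈ U2, a ≠ b → Gᶜ.Adj a b := by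
      intro a ha b hb hne
      exact (SimpleGraph.compl_adj G a b).mpr ⟨hne, hind2 a ha b hb⟩
    rcases select m n U1.card U2.card A.card B.card A'.card B'.card J c hm hn9 hp1 hq1
        hm1 hm2 hd1p hd2q hαβ hαd hβd hαpos hβpos hcsum hcpos hchalf hJd with
      ⟨S, hSJ, hScard, hSlow, hSup⟩ | ⟨S, hSJ, hScard, hSlow, hSup⟩ |
      ⟨S, hSJ, hSp, hSq, hSdp, hSdq⟩
    · -- type B : cross vertex in B', side-1 branches rooted at A'
      obtain ⟨b0, hb0⟩ := Finset.card_pos.mp (show 0 < B'.card by omega)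
      have hb0U2 : b0 ∈ U2 := hB'U hb0
      have hsplit : (∑ y ∈ J \ S, c y) + (∑ y ∈ S, c y) = ∑ y ∈ J, c y :=
        Finset.sum_sdiff hSJ
      have hcardsum : (J \ S).card ≤ ∑ y ∈ J \ S, c y := by
        have h := Finset.card_nsmul_le_sum (J \ S) c 1
          (fun x hx => hcpos x (Finset.sdiff_subset hx))
        rw [smul_eq_mul] at h
        have hη2 : (J \ S).sum c = ∑ y ∈ J \ S, c y := rfl
        omega
      refine hnoT (emb_lemma Gᶜ T r
        (S.biUnion (fun y => Dset hT r y)) ((J \ S).biUnion (fun y => Dset hT r y))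
        (hXcover S hSJ) (hXdisj S hSJ) (hXr S hSJ) (hXr _ Finset.sdiff_subset)
        (fun u v huv hu hv => hXedge S hSJ u v huv hu hv)
        b0 U1 (U2.erase b0) A' (U2.erase b0) hA'U (Finset.Subset.refl _)
        (hdisj.mono_right (Finset.erase_subset _ _))
        (fun hc => Finset.disjoint_left.mp hdisj hc hb0U2)
        (Finset.notMem_erase _ _) hcl1
        (fun a ha b hb hne => hcl2 a (Finset.mem_of_mem_erase ha) b (Finset.mem_of_mem_erase hb) hne)
        ?_ ?_ ?_ ?_ ?_ ?_)
      · intro a ha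
        refine (SimpleGraph.compl_adj G b0 a).mpr ⟨?_, ?_⟩
        · rintro rfl
          exact Finset.disjoint_left.mp hdisj (hA'U ha) hb0U2
        · intro hadj
          exact hnoedge a ha b0 hb0 hadj.symm
      · intro a ha
        refine (SimpleGraph.compl_adj G b0 a).mpr ⟨?_, ?_⟩
        · exact fun hc => (Finset.mem_erase.mp ha).1 hc.symm
        · exact hind2 b0 hb0U2 a (Finset.mem_of_mem_erase ha)
      · rw [hXfacts S hSJ]
        omega
      · rw [hXfacts _ Finset.sdiff_subset, Finset.card_erase_of_mem hb0U2]
        omega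
      · rw [hXinter S hSJ]
        exact hScard
      · rw [hXinter _ Finset.sdiff_subset, Finset.card_erase_of_mem hb0U2]
        omega
    · -- type B' : cross vertex in A', side-2 branches rooted at B'
      obtain ⟨a0, ha0⟩ := Finset.card_pos.mp (show 0 < A'.card by omega)
      have ha0U1 : a0 ∈ U1 := hA'U ha0
      have hsplit : (∑ y ∈ J \ S, c y) + (∑ y ∈ S, c y) = ∑ y ∈ J, c y :=
        Finset.sum_sdiff hSJ
      have hcardsum : (J \ S).card ≤ ∑ y ∈ J \ S, c y := by
        have h := Finset.card_nsmul_le_sum (J \ S) c 1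
          (fun x hx => hcpos x (Finset.sdiff_subset hx))
        rw [smul_eq_mul] at h
        have hη2 : (J \ S).sum c = ∑ y ∈ J \ S, c y := rfl
        omega
      refine hnoT (emb_lemma Gᶜ T r
        ((J \ S).biUnion (fun y => Dset hT r y)) (S.biUnion (fun y => Dset hT r y))
        (fun x hx => (hXcover S hSJ x hx).symm) (hXdisj S hSJ).symm
        (hXr _ Finset.sdiff_subset) (hXr S hSJ)
        (fun u v huv hu hv => hXedge _ Finset.sdiff_subset u v huv hu hv)
        a0 (U1.erase a0) U2 (U1.erase a0) B' (Finset.Subset.refl _) hB'U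
        (hdisj.mono_left (Finset.erase_subset _ _))
        (Finset.notMem_erase _ _)
        (fun hc => Finset.disjoint_left.mp hdisj ha0U1 hc)
        (fun a ha b hb hne => hcl1 a (Finset.mem_of_mem_erase ha) b (Finset.mem_of_mem_erase hb) hne)
        hcl2 ?_ ?_ ?_ ?_ ?_ ?_)
      · intro a ha
        refine (SimpleGraph.compl_adj G a0 a).mpr ⟨?_, ?_⟩
        · exact fun hc => (Finset.mem_erase.mp ha).1 hc.symm
        · exact hind1 a0 ha0U1 a (Finset.mem_of_mem_erase ha)
      · intro b hb
        refine (SimpleGraph.compl_adj G a0 b).mpr ⟨?_, ?_⟩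
        · rintro rfl
          exact Finset.disjoint_left.mp hdisj ha0U1 (hB'U hb)
        · exact hnoedge a0 ha0 b hb
      · rw [hXfacts _ Finset.sdiff_subset, Finset.card_erase_of_mem ha0U1]
        omega
      · rw [hXfacts S hSJ]
        omega
      · rw [hXinter _ Finset.sdiff_subset, Finset.card_erase_of_mem ha0U1]
        omega
      · rw [hXinter S hSJ]
        exact hScard
    · -- type A : cross vertex w itself
      have hint1 : (U1 \ G.neighborFinset w).card + (U1 ∩ G.neighborFinset w).card
          = U1.card := Finset.card_sdiff_add_card_inter _ _
      have hint2 : (U2 \ G.neighborFinset w).card + (U2 ∩ G.neighborFinset w).card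
          = U2.card := Finset.card_sdiff_add_card_inter _ _
      have hiA : U1 ∩ G.neighborFinset w = A := by rw [hAdef, Finset.inter_comm]
      have hiB : U2 ∩ G.neighborFinset w = B := by rw [hBdef, Finset.inter_comm]
      rw [hiA] at hint1
      rw [hiB] at hint2
      refine hnoT (emb_lemma Gᶜ T r
        (S.biUnion (fun y => Dset hT r y)) ((J \ S).biUnion (fun y => Dset hT r y))
        (hXcover S hSJ) (hXdisj S hSJ) (hXr S hSJ) (hXr _ Finset.sdiff_subset)
        (fun u v huv hu hv => hXedge S hSJ u v huv hu hv)
        w U1 U2 (U1 \ G.neighborFinset w) (U2 \ G.neighborFinset w)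
        Finset.sdiff_subset Finset.sdiff_subset hdisj hw1 hw2 hcl1 hcl2
        ?_ ?_ ?_ ?_ ?_ ?_)
      · intro a ha
        refine (SimpleGraph.compl_adj G w a).mpr ⟨?_, ?_⟩
        · rintro rfl
          exact hw1 (Finset.mem_sdiff.mp ha).1
        · exact fun hadj => (Finset.mem_sdiff.mp ha).2
            ((SimpleGraph.mem_neighborFinset _ _ _).mpr hadj)
      · intro a ha
        refine (SimpleGraph.compl_adj G w a).mpr ⟨?_, ?_⟩
        · rintro rfl
          exact hw2 (Finset.mem_sdiff.mp ha).1
        · exact fun hadj => (Finset.mem_sdiff.mp ha).2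
            ((SimpleGraph.mem_neighborFinset _ _ _).mpr hadj)
      · rw [hXfacts S hSJ]
        exact hSp
      · rw [hXfacts _ Finset.sdiff_subset]
        exact hSq
      · rw [hXinter S hSJ]
        omega
      · rw [hXinter _ Finset.sdiff_subset]
        omega
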